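/- The intersection operator on nested regular expressions is not expressible: there is no nested regular expression e (without intersection) such that for every RDF graph G, ⟦e⟧_G = ⟦next ∩ (next/next)⟧_G. -/
import Mathlib


/-- Navigation axes for nested regular expressions. -/
inductive Axis where
  | self | next | edge | node | nextInv | edgeInv | nodeInv
deriving DecidableEq

/-- Nested regular expressions over a universe `U` of constants. -/
inductive NRE (U : Type) where
  | axis : Axis → NRE U
  | axisC : Axis → U → NRE U
  | nest : Axis → NRE U → NRE U
  | comp : NRE U → NRE U → NRE U
  | union : NRE U → NRE U → NRE U
  | star : NRE U → NRE U

variable {U : Type}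

/-- Active domain of an RDF graph. -/
def adom (G : Set (U × U × U)) : Set U :=
  {c | ∃ t ∈ G, c = t.1 ∨ c = t.2.1 ∨ c = t.2.2}

/-- Relational composition. -/
def rcomp (R S : Set (U × U)) : Set (U × U) :=
  {p | ∃ c, (p.1, c) ∈ R ∧ (c, p.2) ∈ S}

/-- Evaluation of a bare axis on an RDF graph. -/
def axisFwd (G : Set (U × U × U)) : Axis → Set (U × U)
  | .self => {p | p.1 = p.2 ∧ p.1 ∈ adom G}
  | .next => {p | ∃ c, (p.1, c, p.2) ∈ G}
  | .edge => {p | ∃ c, (p.1, p.2, c) ∈ G}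
  | .node => {p | ∃ c, (c, p.1, p.2) ∈ G}
  | .nextInv => {p | ∃ c, (p.2, c, p.1) ∈ G}
  | .edgeInv => {p | ∃ c, (p.2, p.1, c) ∈ G}
  | .nodeInv => {p | ∃ c, (c, p.2, p.1) ∈ G}

/-- Evaluation of `axis::c` on an RDF graph. -/
def axisCEval (G : Set (U × U × U)) : Axis → U → Set (U × U)
  | .self, c => {p | p.1 = p.2 ∧ p.1 = c ∧ c ∈ adom G}
  | .next, c => {p | (p.1, c, p.2) ∈ G}
  | .edge, c => {p | (p.1, p.2, c) ∈ G}
  | .node, c => {p | (c, p.1, p.2) ∈ G}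
  | .nextInv, c => {p | (p.2, c, p.1) ∈ G}
  | .edgeInv, c => {p | (p.2, p.1, c) ∈ G}
  | .nodeInv, c => {p | (c, p.2, p.1) ∈ G}

/-- Evaluation of a nested regular expression on an RDF graph. -/
def NRE.eval (G : Set (U × U × U)) : NRE U → Set (U × U)
  | .axis a => axisFwd G a
  | .axisC a c => axisCEval G a c
  | .nest .self e => {p | p.1 = p.2 ∧ ∃ c, (p.1, c) ∈ e.eval G}
  | .nest a e => {p | ∃ c d, p ∈ axisCEval G a c ∧ (c, d) ∈ e.eval G}
  | .comp e1 e2 => rcomp (e1.eval G) (e2.eval G)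
  | .union e1 e2 => e1.eval G ∪ e2.eval G
  | .star e => {p | p.1 = p.2 ∧ p.1 ∈ adom G} ∪
      {p | Relation.TransGen (fun a b => (a, b) ∈ e.eval G) p.1 p.2}

namespace NREProof

variable {U : Type}

/-- Constants occurring in an NRE. -/
def consts : NRE U → Set U
  | .axis _ => ∅
  | .axisC _ c => {c}
  | .nest _ e => consts e
  | .comp e1 e2 => consts e1 ∪ consts e2
  | .union e1 e2 => consts e1 ∪ consts e2
  | .star e => consts e

lemma consts_finite (e : NRE U) : (consts e).Finite := by
  induction e with
  | axis _ => exact Set.finite_empty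
  | axisC _ c => exact Set.finite_singleton c
  | nest _ e ih => exact ih
  | comp e1 e2 ih1 ih2 => exact ih1.union ih2
  | union e1 e2 ih1 ih2 => exact ih1.union ih2
  | star e ih => exact ih

/-- Self-loop graph. -/
def Gone (a p : U) : Set (U × U × U) := {(a, p, a)}
/-- Two-cycle graph. -/
def Gtwo (a p b : U) : Set (U × U × U) := {(a, p, b), (b, p, a)}

open Classical in
/-- The covering map from `Gtwo` to `Gone`. -/
noncomputable def pi (a b x : U) : U := if x = b then a else x

section Lift

variable {a p b : U}

lemma mem_Gone {u v w : U} : (u, v, w) ∈ Gone a p ↔ u = a ∧ v = p ∧ w = a := by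
  simp [Gone, Prod.ext_iff]

lemma mem_Gtwo {u v w : U} :
    (u, v, w) ∈ Gtwo a p b ↔ (u = a ∧ v = p ∧ w = b) ∨ (u = b ∧ v = p ∧ w = a) := by
  simp [Gtwo, Prod.ext_iff]

lemma pi_a : pi a b a = a := by unfold pi; split <;> rfl

lemma pi_b : pi a b b = a := by simp [pi]

lemma pi_p (h : b ≠ p) : pi a b p = p := by
  unfold pi; rw [if_neg (Ne.symm h)]

lemma pi_eq_a {x : U} : pi a b x = a ↔ x = a ∨ x = b := by
  constructor
  · intro h
    by_cases hx : x = b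
    · exact Or.inr hx
    · rw [pi, if_neg hx] at h; exact Or.inl h
  · rintro (rfl | rfl)
    · exact pi_a
    · exact pi_b

lemma pi_eq_p {x : U} (hab : a ≠ p) (hbp : b ≠ p) : pi a b x = p ↔ x = p := by
  constructor
  · intro h
    by_cases hx : x = b
    · subst hx; rw [pi_b] at h; exact absurd h hab
    · rwa [pi, if_neg hx] at h
  · rintro rfl; exact pi_p hbp

lemma mem_adom_Gone {x : U} : x ∈ adom (Gone a p) ↔ x = a ∨ x = p := by
  constructor
  · rintro ⟨t, ht, h⟩
    rcases t with ⟨u, v, w⟩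
    rw [mem_Gone] at ht
    obtain ⟨rfl, rfl, rfl⟩ := ht
    simp only at h
    tauto
  · intro h
    refine ⟨(a, p, a), mem_Gone.2 ⟨rfl, rfl, rfl⟩, ?_⟩
    simp only
    tauto

lemma a_mem_adom_Gtwo : a ∈ adom (Gtwo a p b) :=
  ⟨(a, p, b), mem_Gtwo.2 (Or.inl ⟨rfl, rfl, rfl⟩), Or.inl rfl⟩

lemma p_mem_adom_Gtwo : p ∈ adom (Gtwo a p b) :=
  ⟨(a, p, b), mem_Gtwo.2 (Or.inl ⟨rfl, rfl, rfl⟩), Or.inr (Or.inl rfl)⟩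

lemma b_mem_adom_Gtwo : b ∈ adom (Gtwo a p b) :=
  ⟨(a, p, b), mem_Gtwo.2 (Or.inl ⟨rfl, rfl, rfl⟩), Or.inr (Or.inr rfl)⟩

lemma adom_lift {x : U} (hab : a ≠ p) (hbp : b ≠ p) (h : pi a b x ∈ adom (Gone a p)) :
    x ∈ adom (Gtwo a p b) := by
  rw [mem_adom_Gone] at h
  rcases h with h | h
  · rcases pi_eq_a.1 h with rfl | rfl
    · exact a_mem_adom_Gtwo
    · exact b_mem_adom_Gtwo
  · rw [pi_eq_p hab hbp] at h; subst h; exact p_mem_adom_Gtwo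

/-- Lift a triple of `Gone` at a given preimage of its subject. -/
lemma subj_lift {x : U} (hbp : b ≠ p) (h : pi a b x = a) :
    ∃ z y, (x, z, y) ∈ Gtwo a p b ∧ pi a b z = p ∧ pi a b y = a := by
  rcases pi_eq_a.1 h with rfl | rfl
  · exact ⟨p, b, mem_Gtwo.2 (Or.inl ⟨rfl, rfl, rfl⟩), pi_p hbp, pi_b⟩
  · exact ⟨p, a, mem_Gtwo.2 (Or.inr ⟨rfl, rfl, rfl⟩), pi_p hbp, pi_a⟩

/-- Lift a triple of `Gone` at a given preimage of its object. -/
lemma obj_lift {x : U} (hbp : b ≠ p) (h : pi a b x = a) :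
    ∃ y z, (y, z, x) ∈ Gtwo a p b ∧ pi a b z = p ∧ pi a b y = a := by
  rcases pi_eq_a.1 h with rfl | rfl
  · exact ⟨b, p, mem_Gtwo.2 (Or.inr ⟨rfl, rfl, rfl⟩), pi_p hbp, pi_b⟩
  · exact ⟨a, p, mem_Gtwo.2 (Or.inl ⟨rfl, rfl, rfl⟩), pi_p hbp, pi_a⟩

/-- The main lifting lemma: any pair derivable in `Gone` lifts along `pi` to `Gtwo`. -/
lemma lift (hab : a ≠ p) (hbp : b ≠ p) (e : NRE U)
    (hce : ∀ c ∈ consts e, c ≠ a ∧ c ≠ p ∧ c ≠ b) :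
    ∀ x y', (pi a b x, y') ∈ NRE.eval (Gone a p) e →
      ∃ y, pi a b y = y' ∧ (x, y) ∈ NRE.eval (Gtwo a p b) e := by
  induction e with
  | axis ax =>
    intro x y' h
    cases ax with
    | self =>
      obtain ⟨h1, h2⟩ := h
      exact ⟨x, h1, rfl, adom_lift hab hbp h2⟩
    | next =>
      obtain ⟨c, hc⟩ := h
      have hc' : (pi a b x, c, y') ∈ Gone a p := hc
      obtain ⟨h1, h2, h3⟩ := mem_Gone.1 hc'
      obtain ⟨z, y, hty, hz, hy⟩ := subj_lift hbp h1
      exact ⟨y, by rw [h3]; exact hy, z, hty⟩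
    | edge =>
      obtain ⟨c, hc⟩ := h
      have hc' : (pi a b x, y', c) ∈ Gone a p := hc
      obtain ⟨h1, h2, h3⟩ := mem_Gone.1 hc'
      obtain ⟨z, y, hty, hz, hy⟩ := subj_lift hbp h1
      exact ⟨z, by rw [h2]; exact hz, y, hty⟩
    | node =>
      obtain ⟨c, hc⟩ := h
      have hc' : (c, pi a b x, y') ∈ Gone a p := hc
      obtain ⟨h1, h2, h3⟩ := mem_Gone.1 hc'
      have hx : x = p := (pi_eq_p hab hbp).1 h2
      exact ⟨b, by rw [h3]; exact pi_b,
        a, by rw [hx]; exact mem_Gtwo.2 (Or.inl ⟨rfl, rfl, rfl⟩)⟩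
    | nextInv =>
      obtain ⟨c, hc⟩ := h
      have hc' : (y', c, pi a b x) ∈ Gone a p := hc
      obtain ⟨h1, h2, h3⟩ := mem_Gone.1 hc'
      obtain ⟨y, z, hty, hz, hy⟩ := obj_lift hbp h3
      exact ⟨y, by rw [h1]; exact hy, z, hty⟩
    | edgeInv =>
      obtain ⟨c, hc⟩ := h
      have hc' : (y', pi a b x, c) ∈ Gone a p := hc
      obtain ⟨h1, h2, h3⟩ := mem_Gone.1 hc'
      have hx : x = p := (pi_eq_p hab hbp).1 h2
      exact ⟨a, by rw [h1]; exact pi_a,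
        b, by rw [hx]; exact mem_Gtwo.2 (Or.inl ⟨rfl, rfl, rfl⟩)⟩
    | nodeInv =>
      obtain ⟨c, hc⟩ := h
      have hc' : (c, y', pi a b x) ∈ Gone a p := hc
      obtain ⟨h1, h2, h3⟩ := mem_Gone.1 hc'
      rcases pi_eq_a.1 h3 with hx | hx
      · exact ⟨p, by rw [h2]; exact pi_p hbp,
          b, by rw [hx]; exact mem_Gtwo.2 (Or.inr ⟨rfl, rfl, rfl⟩)⟩
      · exact ⟨p, by rw [h2]; exact pi_p hbp,
          a, by rw [hx]; exact mem_Gtwo.2 (Or.inl ⟨rfl, rfl, rfl⟩)⟩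
  | axisC ax c =>
    intro x y' h
    obtain ⟨hca, hcp, hcb⟩ := hce c rfl
    exfalso
    cases ax with
    | self =>
      obtain ⟨h1, h2, h3⟩ := h
      rcases mem_adom_Gone.1 h3 with h' | h'
      · exact hca h'
      · exact hcp h'
    | next =>
      have h' : (pi a b x, c, y') ∈ Gone a p := h
      exact hcp (mem_Gone.1 h').2.1
    | edge =>
      have h' : (pi a b x, y', c) ∈ Gone a p := h
      exact hca (mem_Gone.1 h').2.2
    | node =>
      have h' : (c, pi a b x, y') ∈ Gone a p := h
      exact hca (mem_Gone.1 h').1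
    | nextInv =>
      have h' : (y', c, pi a b x) ∈ Gone a p := h
      exact hcp (mem_Gone.1 h').2.1
    | edgeInv =>
      have h' : (y', pi a b x, c) ∈ Gone a p := h
      exact hca (mem_Gone.1 h').2.2
    | nodeInv =>
      have h' : (c, y', pi a b x) ∈ Gone a p := h
      exact hca (mem_Gone.1 h').1
  | nest ax e ih =>
    intro x y' h
    cases ax with
    | self =>
      obtain ⟨h1, c, hc⟩ := h
      obtain ⟨c'', hc''1, hc''2⟩ := ih hce x c hc
      exact ⟨x, h1, rfl, c'', hc''2⟩
    | next =>
      obtain ⟨c, d, hcd, hd⟩ := h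
      have hcd' : (pi a b x, c, y') ∈ Gone a p := hcd
      obtain ⟨h1, h2, h3⟩ := mem_Gone.1 hcd'
      obtain ⟨z, y, hty, hz, hy⟩ := subj_lift hbp h1
      have hpd : (p, d) ∈ NRE.eval (Gone a p) e := h2 ▸ hd
      obtain ⟨d'', _, hd''2⟩ := ih hce z d (by rw [hz]; exact hpd)
      exact ⟨y, by rw [h3]; exact hy, z, d'', hty, hd''2⟩
    | edge =>
      obtain ⟨c, d, hcd, hd⟩ := h
      have hcd' : (pi a b x, y', c) ∈ Gone a p := hcd
      obtain ⟨h1, h2, h3⟩ := mem_Gone.1 hcd'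
      obtain ⟨z, y, hty, hz, hy⟩ := subj_lift hbp h1
      have had : (a, d) ∈ NRE.eval (Gone a p) e := h3 ▸ hd
      obtain ⟨d'', _, hd''2⟩ := ih hce y d (by rw [hy]; exact had)
      exact ⟨z, by rw [h2]; exact hz, y, d'', hty, hd''2⟩
    | node =>
      obtain ⟨c, d, hcd, hd⟩ := h
      have hcd' : (c, pi a b x, y') ∈ Gone a p := hcd
      obtain ⟨h1, h2, h3⟩ := mem_Gone.1 hcd'
      have hx : x = p := (pi_eq_p hab hbp).1 h2
      have had : (a, d) ∈ NRE.eval (Gone a p) e := h1 ▸ hd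
      obtain ⟨d'', _, hd''2⟩ := ih hce a d (by rw [pi_a]; exact had)
      exact ⟨b, by rw [h3]; exact pi_b,
        a, d'', by rw [hx]; exact mem_Gtwo.2 (Or.inl ⟨rfl, rfl, rfl⟩), hd''2⟩
    | nextInv =>
      obtain ⟨c, d, hcd, hd⟩ := h
      have hcd' : (y', c, pi a b x) ∈ Gone a p := hcd
      obtain ⟨h1, h2, h3⟩ := mem_Gone.1 hcd'
      obtain ⟨y, z, hty, hz, hy⟩ := obj_lift hbp h3
      have hpd : (p, d) ∈ NRE.eval (Gone a p) e := h2 ▸ hd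
      obtain ⟨d'', _, hd''2⟩ := ih hce z d (by rw [hz]; exact hpd)
      exact ⟨y, by rw [h1]; exact hy, z, d'', hty, hd''2⟩
    | edgeInv =>
      obtain ⟨c, d, hcd, hd⟩ := h
      have hcd' : (y', pi a b x, c) ∈ Gone a p := hcd
      obtain ⟨h1, h2, h3⟩ := mem_Gone.1 hcd'
      have hx : x = p := (pi_eq_p hab hbp).1 h2
      have had : (a, d) ∈ NRE.eval (Gone a p) e := h3 ▸ hd
      obtain ⟨d'', _, hd''2⟩ := ih hce b d (by rw [pi_b]; exact had)
      exact ⟨a, by rw [h1]; exact pi_a,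
        b, d'', by rw [hx]; exact mem_Gtwo.2 (Or.inl ⟨rfl, rfl, rfl⟩), hd''2⟩
    | nodeInv =>
      obtain ⟨c, d, hcd, hd⟩ := h
      have hcd' : (c, y', pi a b x) ∈ Gone a p := hcd
      obtain ⟨h1, h2, h3⟩ := mem_Gone.1 hcd'
      have had : (a, d) ∈ NRE.eval (Gone a p) e := h1 ▸ hd
      rcases pi_eq_a.1 h3 with hx | hx
      · obtain ⟨d'', _, hd''2⟩ := ih hce b d (by rw [pi_b]; exact had)
        exact ⟨p, by rw [h2]; exact pi_p hbp,
          b, d'', by rw [hx]; exact mem_Gtwo.2 (Or.inr ⟨rfl, rfl, rfl⟩), hd''2⟩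
      · obtain ⟨d'', _, hd''2⟩ := ih hce a d (by rw [pi_a]; exact had)
        exact ⟨p, by rw [h2]; exact pi_p hbp,
          a, d'', by rw [hx]; exact mem_Gtwo.2 (Or.inl ⟨rfl, rfl, rfl⟩), hd''2⟩
  | comp e1 e2 ih1 ih2 =>
    intro x y' h
    obtain ⟨m, hm1, hm2⟩ := h
    have hce1 : ∀ c ∈ consts e1, c ≠ a ∧ c ≠ p ∧ c ≠ b := fun c hc => hce c (Or.inl hc)
    have hce2 : ∀ c ∈ consts e2, c ≠ a ∧ c ≠ p ∧ c ≠ b := fun c hc => hce c (Or.inr hc)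
    obtain ⟨m'', hm''1, hm''2⟩ := ih1 hce1 x m hm1
    obtain ⟨y, hy1, hy2⟩ := ih2 hce2 m'' y' (by rw [hm''1]; exact hm2)
    exact ⟨y, hy1, m'', hm''2, hy2⟩
  | union e1 e2 ih1 ih2 =>
    intro x y' h
    have hce1 : ∀ c ∈ consts e1, c ≠ a ∧ c ≠ p ∧ c ≠ b := fun c hc => hce c (Or.inl hc)
    have hce2 : ∀ c ∈ consts e2, c ≠ a ∧ c ≠ p ∧ c ≠ b := fun c hc => hce c (Or.inr hc)
    rcases h with h | h
    · obtain ⟨y, hy1, hy2⟩ := ih1 hce1 x y' h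
      exact ⟨y, hy1, Or.inl hy2⟩
    · obtain ⟨y, hy1, hy2⟩ := ih2 hce2 x y' h
      exact ⟨y, hy1, Or.inr hy2⟩
  | star e ih =>
    intro x y' h
    rcases h with h | h
    · exact ⟨x, h.1, Or.inl ⟨rfl, adom_lift hab hbp h.2⟩⟩
    · suffices h' : ∀ u v', Relation.TransGen
          (fun s t => (s, t) ∈ NRE.eval (Gone a p) e) u v' →
          ∀ x, pi a b x = u → ∃ y, pi a b y = v' ∧
            Relation.TransGen (fun s t => (s, t) ∈ NRE.eval (Gtwo a p b) e) x y by
        obtain ⟨y, hy1, hy2⟩ := h' _ _ h x rfl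
        exact ⟨y, hy1, Or.inr hy2⟩
      intro u v' htg
      induction htg with
      | single hstep =>
        intro x hx
        obtain ⟨y, hy1, hy2⟩ := ih hce x _ (by rw [hx]; exact hstep)
        exact ⟨y, hy1, Relation.TransGen.single hy2⟩
      | tail h1 hstep ihtg =>
        intro x hx
        obtain ⟨m, hm1, hm2⟩ := ihtg x hx
        obtain ⟨y, hy1, hy2⟩ := ih hce m _ (by rw [hm1]; exact hstep)
        exact ⟨y, hy1, hm2.tail hy2⟩

end Lift

theorem main {U : Type} [Infinite U] :
    ¬ ∃ e : NRE U, ∀ G : Set (U × U × U), G.Finite →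
      NRE.eval G e
        = axisFwd G Axis.next ∩ rcomp (axisFwd G Axis.next) (axisFwd G Axis.next) := by
  rintro ⟨e, he⟩
  -- choose three fresh, distinct elements
  obtain ⟨a, ha⟩ := ((consts_finite e).infinite_compl).nonempty
  obtain ⟨p, hp⟩ := (((consts_finite e).union (Set.finite_singleton a)).infinite_compl).nonempty
  obtain ⟨b, hb⟩ := (((consts_finite e).union
    ((Set.finite_singleton a).union (Set.finite_singleton p))).infinite_compl).nonempty
  simp only [Set.mem_compl_iff, Set.mem_union, Set.mem_singleton_iff, not_or] at ha hp hb
  have hab : a ≠ p := fun h => hp.2 h.symm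
  have hbp : b ≠ p := hb.2.2
  have hba : b ≠ a := hb.2.1
  have hce : ∀ c ∈ consts e, c ≠ a ∧ c ≠ p ∧ c ≠ b :=
    fun c hc => ⟨fun h => ha (h ▸ hc), fun h => hp.1 (h ▸ hc), fun h => hb.1 (h ▸ hc)⟩
  have hG1 : (Gone a p).Finite := Set.finite_singleton _
  have hG2 : (Gtwo a p b).Finite := (Set.finite_singleton _).insert _
  -- (a, a) is in the answer on Gone
  have haa : (a, a) ∈ NRE.eval (Gone a p) e := by
    rw [he (Gone a p) hG1]
    exact ⟨⟨p, mem_Gone.2 ⟨rfl, rfl, rfl⟩⟩, a, ⟨p, mem_Gone.2 ⟨rfl, rfl, rfl⟩⟩,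
      p, mem_Gone.2 ⟨rfl, rfl, rfl⟩⟩
  -- lift to Gtwo, where the answer is empty: contradiction
  obtain ⟨y, hy, hmem⟩ := lift hab hbp e hce a a (by rw [pi_a]; exact haa)
  rw [he (Gtwo a p b) hG2] at hmem
  obtain ⟨hnext, hcomp⟩ := hmem
  obtain ⟨c, hc⟩ := hnext
  obtain ⟨m, hm1, hm2⟩ := hcomp
  obtain ⟨c1, hc1⟩ := hm1
  obtain ⟨c2, hc2⟩ := hm2
  have hc' : (a, c, y) ∈ Gtwo a p b := hc
  have hc1' : (a, c1, m) ∈ Gtwo a p b := hc1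
  have hc2' : (m, c2, y) ∈ Gtwo a p b := hc2
  have hyb : y = b := by
    rcases mem_Gtwo.1 hc' with ⟨_, _, h⟩ | ⟨h, _, _⟩
    · exact h
    · exact absurd h.symm hba
  have hmb : m = b := by
    rcases mem_Gtwo.1 hc1' with ⟨_, _, h⟩ | ⟨h, _, _⟩
    · exact h
    · exact absurd h.symm hba
  rcases mem_Gtwo.1 hc2' with ⟨h, _, _⟩ | ⟨_, _, h⟩
  · exact hba (hmb ▸ h)
  · exact hba (hyb ▸ h)

end NREProof

/-- The intersection operator is not expressible in nested regular
expressions: no nre e satisfies ⟦e⟧_G = ⟦next⟧_G ∩ ⟦next/next⟧_G for every RDF graph G. -/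
theorem intersection_not_expressible_in_nre {U : Type} [Infinite U] :
    ¬ ∃ e : NRE U, ∀ G : Set (U × U × U), G.Finite →
      NRE.eval G e
        = axisFwd G Axis.next ∩ rcomp (axisFwd G Axis.next) (axisFwd G Axis.next) := by
  exact NREProof.main
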